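/- arXiv:1905.12312 — 3 statements merged into one kernel-verified Lean document; each statement's English description precedes it below -/
import Mathlib

section
/- The modified Laguerre polynomials l_n^(α)(x) := n!·L_n^(α−n)(−x) satisfy the recurrence l_n^(α)(x) = (x+α−n+1)·l_{n−1}^(α)(x) + x·(n−1)·l_{n−2}^(α)(x) for all n ≥ 2, with l_0^(α)(x) = 1 and l_1^(α)(x) = x+α. -/
open Polynomial

/-- Classical Laguerre polynomials with parameter `α`, defined by their 3-term recurrence. -/
noncomputable def Lag (α : ℝ) : ℕ → Polynomial ℝ
  | 0 => 1
  | 1 => C (α + 1) - X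
  | (n + 2) =>
      (C 2 + C (1 / ((n : ℝ) + 2)) * (C (α - 1) - X)) * Lag α (n + 1)
        - C (1 + (α - 1) / ((n : ℝ) + 2)) * Lag α n

/-- Modified Laguerre polynomials `l_n^(α)(x) := n! · L_n^(α-n)(-x)`. -/
noncomputable def lmod (α : ℝ) (n : ℕ) : Polynomial ℝ :=
  (Nat.factorial n : ℝ) • ((Lag (α - n) n).comp (-X))

lemma evalrec (α y : ℝ) (n : ℕ) :
    eval y (Lag α (n+2)) = (2 + (1/((n:ℝ)+2))*(α-1-y)) * eval y (Lag α (n+1))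
      - (1+(α-1)/((n:ℝ)+2)) * eval y (Lag α n) := by
  rw [Lag]; simp [eval_mul]

lemma lagA (α y : ℝ) : ∀ n : ℕ, eval y (Lag α (n+1)) =
    eval y (Lag (α+1) (n+1)) - eval y (Lag (α+1) n) := by
  intro n
  induction n using Nat.twoStepInduction with
  | zero => simp [Lag]; ring
  | one =>
      rw [show (1:ℕ)+1 = 0+2 from rfl, evalrec, evalrec]
      simp [Lag]; ring
  | more n ih1 ih2 =>
      have hne : ((n:ℝ)+2) ≠ 0 := by positivity
      have hne3 : ((n:ℝ)+3) ≠ 0 := by positivity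
      have e1 := evalrec α y (n+1)
      have e2 := evalrec (α+1) y (n+1)
      have e3 := evalrec (α+1) y n
      push_cast at e1 e2 e3
      rw [show n+1+2 = n+3 from rfl] at e1 e2
      rw [show n+2+1 = n+3 from rfl, e1, e2, ih1, ih2, e3]
      field_simp
      ring

lemma lagB (α y : ℝ) : ∀ n : ℕ, y * eval y (Lag (α+1) n) =
    ((n:ℝ)+α+1) * eval y (Lag α n) - ((n:ℝ)+1) * eval y (Lag α (n+1)) := by
  intro n
  match n with
  | 0 => simp [Lag]
  | 1 =>
      rw [show (1:ℕ)+1 = 0+2 from rfl, evalrec]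
      simp [Lag]; ring
  | (n+2) =>
      have hne : ((n:ℝ)+2) ≠ 0 := by positivity
      have hne3 : ((n:ℝ)+3) ≠ 0 := by positivity
      have e1 := evalrec α y (n+1)
      have e3 := evalrec (α+1) y n
      have a1 := lagA α y (n+1)
      have a2 := lagA α y n
      push_cast at e1 e3 ⊢
      rw [show n+1+2 = n+3 from rfl] at e1
      rw [show n+2+1 = n+3 from rfl, e1, a1, a2, e3]
      field_simp
      ring

lemma lagC (β z : ℝ) (n : ℕ) : ((n:ℝ)+2) * eval z (Lag β (n+2)) =
    (β+1-z) * eval z (Lag (β+1) (n+1)) - z * eval z (Lag (β+2) n) := by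
  have hB1 := lagB β z (n+1)
  have hB2 := lagB (β+1) z n
  have hA := lagA β z n
  push_cast at hB1
  rw [show n+1+1 = n+2 from rfl] at hB1
  rw [show β+1+1 = β+2 by ring] at hB2
  linear_combination ((n:ℝ)+β+2) * hA + hB1 + hB2

theorem stmt1 (α : ℝ) :
    lmod α 0 = 1 ∧ lmod α 1 = X + C α ∧
      ∀ n : ℕ, 2 ≤ n →
        lmod α n = (X + C (α - n + 1)) * lmod α (n - 1)
          + X * C ((n : ℝ) - 1) * lmod α (n - 2) := by
  refine ⟨by simp [lmod, Lag], ?_, ?_⟩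
  · have : lmod α 1 = (1 : ℝ) • ((C (α - 1 + 1) - X).comp (-X)) := by
      simp [lmod, Lag]
    rw [this]; simp; ring
  · intro n hn
    obtain ⟨m, rfl⟩ : ∃ m, n = m + 2 := ⟨n - 2, by omega⟩
    apply Polynomial.funext; intro y
    simp only [lmod, eval_smul, smul_eq_mul, eval_comp, eval_neg, eval_X, eval_add,
      eval_mul, eval_C, show m+2-1 = m+1 from rfl, show m+2-2 = m from rfl]
    have hC := lagC (α - ((m:ℝ)+2)) (-y) m
    rw [show (α - ((m:ℝ)+2)) + 1 = α - ((m:ℝ)+1) by ring,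
        show (α - ((m:ℝ)+2)) + 2 = α - (m:ℝ) by ring] at hC
    have hf1 : (Nat.factorial (m+2) : ℝ) = ((m:ℝ)+2) * (Nat.factorial (m+1)) := by
      rw [Nat.factorial_succ]; push_cast; ring
    have hf2 : (Nat.factorial (m+1) : ℝ) = ((m:ℝ)+1) * (Nat.factorial m) := by
      rw [Nat.factorial_succ]; push_cast; ring
    push_cast
    rw [hf1]
    linear_combination ((Nat.factorial (m+1) : ℝ)) * hC
      + y * (eval (-y) (Lag (α - (m:ℝ)) m)) * hf2
end

section
/- Let (n_1, …, n_r) be strictly positive integers with n_1 > n_2 > … > n_r. Then Σ_{k=1}^{r} ((n_k + 1 − r)/(n_k + 1)) · Π_{j≠k} (n_k + 1 − n_j)/(n_k − n_j) = r · Π_{k=1}^{r} n_k/(n_k + 1). -/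
open Polynomial Finset

/-- Coefficient extraction via Lagrange interpolation. -/
lemma key_lagrange (S : Finset ℚ) (P : ℚ[X]) (hd : P.degree < (S.card : WithBot ℕ)) :
    ∑ s ∈ S, P.eval s * (∏ t ∈ S.erase s, (s - t))⁻¹ = P.coeff (S.card - 1) := by
  conv_rhs => rw [Lagrange.eq_interpolate (Function.injective_id.injOn) hd]
  rw [Lagrange.interpolate_apply, Polynomial.finset_sum_coeff]
  refine Finset.sum_congr rfl fun s hs => ?_
  rw [Polynomial.coeff_C_mul]
  congr 1
  have hdeg := Lagrange.natDegree_basis (Function.injective_id.injOn) hs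
  rw [← hdeg, Polynomial.coeff_natDegree, Lagrange.basis, Polynomial.leadingCoeff_prod,
    ← Finset.prod_inv_distrib]
  refine Finset.prod_congr rfl fun t ht => ?_
  rw [Lagrange.basisDivisor, leadingCoeff_mul, leadingCoeff_C, leadingCoeff_X_sub_C, mul_one]
  rfl

theorem stmt9 (r : ℕ) (n : Fin r → ℕ) (hpos : ∀ k, 0 < n k) (hanti : StrictAnti n) :
    ∑ k : Fin r,
        (((n k : ℚ) + 1 - r) / ((n k : ℚ) + 1)) *
          ∏ j ∈ Finset.univ.erase k, (((n k : ℚ) + 1 - (n j : ℚ)) / ((n k : ℚ) - (n j : ℚ)))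
      = r * ∏ k : Fin r, ((n k : ℚ) / ((n k : ℚ) + 1)) := by
  classical
  set x : Fin r → ℚ := fun k => (n k : ℚ) with hxdef
  have hxinj : Function.Injective x := by
    intro a b hab
    exact hanti.injective (Nat.cast_injective hab)
  have hxpos : ∀ k, 0 < x k := fun k => by
    have := hpos k
    simp only [hxdef]
    exact_mod_cast this
  -- the two monic polynomials
  set A : ℚ[X] := (X - C ((r : ℚ) - 1)) * ∏ j : Fin r, (X - C (x j - 1)) with hA
  set B : ℚ[X] := (X - C (-1 : ℚ)) * ∏ j : Fin r, (X - C (x j)) with hB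
  have hmPA : (∏ j : Fin r, (X - C (x j - 1))).Monic :=
    monic_prod_of_monic _ _ fun j _ => monic_X_sub_C _
  have hmPB : (∏ j : Fin r, (X - C (x j))).Monic :=
    monic_prod_of_monic _ _ fun j _ => monic_X_sub_C _
  have hmA : A.Monic := (monic_X_sub_C _).mul hmPA
  have hmB : B.Monic := (monic_X_sub_C _).mul hmPB
  have hndPA : (∏ j : Fin r, (X - C (x j - 1))).natDegree = r := by
    rw [natDegree_prod _ _ fun j _ => X_sub_C_ne_zero _]
    simp only [natDegree_X_sub_C]
    simp
  have hndPB : (∏ j : Fin r, (X - C (x j))).natDegree = r := by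
    rw [natDegree_prod _ _ fun j _ => X_sub_C_ne_zero _]
    simp only [natDegree_X_sub_C]
    simp
  have hndA : A.natDegree = r + 1 := by
    rw [hA, (monic_X_sub_C _).natDegree_mul hmPA, natDegree_X_sub_C, hndPA, add_comm]
  have hndB : B.natDegree = r + 1 := by
    rw [hB, (monic_X_sub_C _).natDegree_mul hmPB, natDegree_X_sub_C, hndPB, add_comm]
  have hnext : A.nextCoeff = B.nextCoeff := by
    rw [hA, hB, Monic.nextCoeff_mul (monic_X_sub_C _) hmPA,
      Monic.nextCoeff_mul (monic_X_sub_C _) hmPB,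
      Monic.nextCoeff_prod _ _ fun j _ => monic_X_sub_C _,
      Monic.nextCoeff_prod _ _ fun j _ => monic_X_sub_C _]
    simp only [nextCoeff_X_sub_C, neg_sub, neg_neg]
    rw [Finset.sum_sub_distrib, Finset.sum_const, Finset.card_univ, Fintype.card_fin]
    rw [Finset.sum_neg_distrib]
    ring
  -- degree of the difference
  have hdP : (A - B).degree < (r : WithBot ℕ) := by
    rw [Polynomial.degree_lt_iff_coeff_zero]
    intro m hm
    rw [Polynomial.coeff_sub, sub_eq_zero]
    have hm' : r ≤ m := by exact_mod_cast hm
    rcases eq_or_lt_of_le hm' with rfl | hm1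
    · have h1 := hnext
      rw [nextCoeff_of_natDegree_pos (by omega : 0 < A.natDegree),
        nextCoeff_of_natDegree_pos (by omega : 0 < B.natDegree), hndA, hndB,
        Nat.add_sub_cancel] at h1
      exact h1
    · rcases eq_or_lt_of_le (Nat.succ_le_of_lt hm1) with hm2 | hm2
      · rw [show m = A.natDegree by omega, hmA.coeff_natDegree,
          show A.natDegree = B.natDegree from hndA.trans hndB.symm, hmB.coeff_natDegree]
      · rw [Polynomial.coeff_eq_zero_of_natDegree_lt (by omega),
          Polynomial.coeff_eq_zero_of_natDegree_lt (by omega)]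
  -- the node set
  set I : Finset ℚ := Finset.image x Finset.univ with hI
  have hmem : (-1 : ℚ) ∉ I := by
    simp only [hI, Finset.mem_image, not_exists]
    intro k
    intro h
    rcases h with ⟨_, h2⟩
    linarith [hxpos k]
  have hcardI : I.card = r := by
    rw [hI, Finset.card_image_of_injective _ hxinj, Finset.card_univ, Fintype.card_fin]
  set S : Finset ℚ := insert (-1 : ℚ) I with hS
  have hcard : S.card = r + 1 := by rw [hS, Finset.card_insert_of_notMem hmem, hcardI]
  have hkey : ∑ s ∈ S, (A - B).eval s * (∏ t ∈ S.erase s, (s - t))⁻¹ = 0 := by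
    rw [key_lagrange S (A - B) (by rw [hcard]; exact hdP.trans (by exact_mod_cast Nat.lt_succ_self r)),
      hcard, Nat.add_sub_cancel]
    exact Polynomial.coeff_eq_zero_of_degree_lt hdP
  -- evaluations
  have hevalB : ∀ k, B.eval (x k) = 0 := by
    intro k
    rw [hB]
    simp only [eval_mul, eval_prod, eval_sub, eval_X, eval_C]
    have h0 : ∏ j : Fin r, (x k - x j) = 0 :=
      Finset.prod_eq_zero (Finset.mem_univ k) (sub_self (x k))
    rw [h0, mul_zero]
  have hevalA : ∀ k, A.eval (x k)
      = (x k + 1 - r) * ∏ j ∈ Finset.univ.erase k, (x k + 1 - x j) := by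
    intro k
    rw [hA]
    simp only [eval_mul, eval_prod, eval_sub, eval_X, eval_C]
    rw [← Finset.mul_prod_erase _ _ (Finset.mem_univ k)]
    have h1 : x k - (x k - 1) = 1 := by ring
    rw [h1, one_mul]
    congr 1
    · ring
    · exact Finset.prod_congr rfl fun j _ => by ring
  have hevalAneg : A.eval (-1) = (-(r : ℚ)) * ∏ j : Fin r, (-(x j)) := by
    rw [hA]
    simp only [eval_mul, eval_prod, eval_sub, eval_X, eval_C]
    congr 1
    · ring
    · exact Finset.prod_congr rfl fun j _ => by ring
  have hevalBneg : B.eval (-1) = 0 := by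
    rw [hB]
    simp only [eval_mul, eval_prod, eval_sub, eval_X, eval_C]
    rw [sub_self, zero_mul]
  -- decompose the sum
  rw [hS, Finset.sum_insert hmem, Finset.erase_insert hmem, hI] at hkey
  rw [Finset.sum_image (fun a _ b _ h => hxinj h)] at hkey
  have hfirst : eval (-1:ℚ) (A - B) * (∏ t ∈ Finset.image x Finset.univ, ((-1:ℚ) - t))⁻¹
      = -(r * ∏ k : Fin r, (x k / (x k + 1))) := by
    rw [eval_sub, hevalAneg, hevalBneg, sub_zero,
      Finset.prod_image (fun a _ b _ h => hxinj h), mul_assoc,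
      ← Finset.prod_inv_distrib, ← Finset.prod_mul_distrib]
    have hfac : ∀ j : Fin r, -x j * ((-1:ℚ) - x j)⁻¹ = x j / (x j + 1) := by
      intro j
      rw [← div_eq_mul_inv, show ((-1:ℚ) - x j) = -(x j + 1) by ring, neg_div_neg_eq]
    rw [Finset.prod_congr rfl fun j _ => hfac j]
    ring
  have hsummand : ∀ k : Fin r,
      eval (x k) (A - B) *
        (∏ t ∈ (insert (-1:ℚ) (Finset.image x Finset.univ)).erase (x k), (x k - t))⁻¹
      = ((x k + 1 - r) / (x k + 1)) *
          ∏ j ∈ Finset.univ.erase k, ((x k + 1 - x j) / (x k - x j)) := by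
    intro k
    have hne : (-1:ℚ) ≠ x k := by
      have := hxpos k
      intro h
      rw [← h] at this
      linarith
    have herase : (insert (-1:ℚ) (Finset.image x Finset.univ)).erase (x k)
        = insert (-1:ℚ) (Finset.image x (Finset.univ.erase k)) := by
      rw [Finset.erase_insert_of_ne hne, Finset.image_erase hxinj]
    have hnotmem : (-1:ℚ) ∉ Finset.image x (Finset.univ.erase k) := fun h =>
      (by rw [hI] at hmem; exact hmem :
        (-1:ℚ) ∉ Finset.image x Finset.univ)
        (Finset.image_subset_image (Finset.erase_subset _ _) h)
    rw [herase, Finset.prod_insert hnotmem,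
      Finset.prod_image (fun a _ b _ h => hxinj h),
      eval_sub, hevalA, hevalB, sub_zero,
      Finset.prod_div_distrib, div_mul_div_comm, div_eq_mul_inv,
      show x k - (-1:ℚ) = x k + 1 by ring]
  rw [Finset.sum_congr rfl (fun k _ => hsummand k), hfirst] at hkey
  show ∑ k : Fin r, ((x k + 1 - (r:ℚ)) / (x k + 1)) *
      ∏ j ∈ Finset.univ.erase k, ((x k + 1 - x j) / (x k - x j))
      = r * ∏ k : Fin r, (x k / (x k + 1))
  linarith [hkey]
end

section
/- Let X = {(j,σ) ∈ {1,…,r}×S_r : σ(j) ≠ r} and define T : X → X by T(j,σ) = (k,τ) with k = σ⁻¹(σ(j)+1) and τ = σ∘(j k) (composition with the transposition swapping j and k). Then T is a well-defined involution on X with sgn(τ) = −sgn(σ) and τ(k) = σ(j). -/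
theorem stmt18 (r : ℕ) (j : Fin r) (σ : Equiv.Perm (Fin r)) (h : (σ j : ℕ) + 1 < r)
    (k : Fin r) (hk : k = σ⁻¹ ⟨(σ j : ℕ) + 1, h⟩)
    (τ : Equiv.Perm (Fin r)) (hτ : τ = σ * Equiv.swap j k) :
    τ k = σ j ∧ (τ k : ℕ) + 1 < r ∧
      Equiv.Perm.sign τ = -Equiv.Perm.sign σ ∧
      ∀ h2 : (τ k : ℕ) + 1 < r,
        τ⁻¹ ⟨(τ k : ℕ) + 1, h2⟩ = j ∧
          τ * Equiv.swap k (τ⁻¹ ⟨(τ k : ℕ) + 1, h2⟩) = σ := by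
  have hσk : σ k = ⟨(σ j : ℕ) + 1, h⟩ := by rw [hk]; simp
  have hjk : j ≠ k := by
    intro he
    rw [← he] at hσk
    have h' := congrArg Fin.val hσk
    simp at h'
  have hτk : τ k = σ j := by
    rw [hτ]; simp [Equiv.swap_apply_right]
  refine ⟨hτk, by rw [hτk]; exact h, ?_, ?_⟩
  · rw [hτ]; simp [Equiv.Perm.sign_swap hjk]
  · intro h2
    have hval : (⟨(τ k : ℕ) + 1, h2⟩ : Fin r) = ⟨(σ j : ℕ) + 1, h⟩ := by
      simp [hτk]
    have hinv : τ⁻¹ ⟨(τ k : ℕ) + 1, h2⟩ = j := by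
      rw [hval, hτ, ← hσk]
      simp [Equiv.swap_apply_left]
    refine ⟨hinv, ?_⟩
    rw [hinv, hτ, Equiv.swap_comm k j]
    simp [mul_assoc]
end
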